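/- Let A ∈ ℝ^{m×d}, Y ∈ ℝ^{m×n}, λ > 0, and 0 < p < 2. Let X_k ∈ ℝ^{d×n} be such that every row of X_k is nonzero. Define the diagonal matrix H_k ∈ ℝ^{d×d} with (H_k)_{ii} = 1/‖X_k^i‖₂^{2−p}, define Q_k(X) = Tr((AX − Y)ᵀ(AX − Y)) + λ·(p/2)·Tr(XᵀH_kX), and define J(X) = Σ_{i=1}^m ‖(AX − Y)^i‖₂² + λ·Σ_{i=1}^d ‖X^i‖₂^p. If X_{k+1} ∈ ℝ^{d×n} satisfies Q_k(X_{k+1}) ≤ Q_k(X_k), then J(X_{k+1}) ≤ J(X_k). -/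

import Mathlib

/-!
The quadratic model `Q_k` majorizes `J` up to a constant, with equality at `X_k`: by weighted
AM–GM, `t ↦ t ^ p - (p / 2) t² / s ^ (2 - p)` is maximal at `t = s` when `0 ≤ p ≤ 2`. Hence
`J - Q_k` is largest at `X_k`, and any step that does not increase `Q_k` does not increase `J`.
-/

open Matrix

/-- Euclidean norm of the i-th row of a matrix. -/
noncomputable def rowNorm {m n : ℕ} (M : Matrix (Fin m) (Fin n) ℝ) (i : Fin m) : ℝ :=
  Real.sqrt (∑ j, M i j ^ 2)

section RowNorm

variable {m n : ℕ}

lemma rowNorm_nonneg (M : Matrix (Fin m) (Fin n) ℝ) (i : Fin m) : 0 ≤ rowNorm M i :=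
  Real.sqrt_nonneg _

lemma rowNorm_sq (M : Matrix (Fin m) (Fin n) ℝ) (i : Fin m) :
    rowNorm M i ^ 2 = ∑ j, M i j ^ 2 :=
  Real.sq_sqrt (Finset.sum_nonneg fun _ _ => sq_nonneg _)

lemma rowNorm_pos {M : Matrix (Fin m) (Fin n) ℝ} {i : Fin m} (h : M i ≠ 0) :
    0 < rowNorm M i := by
  obtain ⟨j, hj⟩ := Function.ne_iff.1 h
  exact Real.sqrt_pos.2 <|
    Finset.sum_pos' (fun j _ => sq_nonneg _) ⟨j, Finset.mem_univ _, sq_pos_of_ne_zero hj⟩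

lemma trace_transpose_mul_self_eq_sum_rowNorm_sq (M : Matrix (Fin m) (Fin n) ℝ) :
    trace (Mᵀ * M) = ∑ i, rowNorm M i ^ 2 := by
  simp only [trace, diag, mul_apply, transpose_apply, rowNorm_sq]
  rw [Finset.sum_comm]
  simp only [sq]

lemma trace_transpose_mul_diagonal_mul_eq_sum (w : Fin m → ℝ) (X : Matrix (Fin m) (Fin n) ℝ) :
    trace (Xᵀ * diagonal w * X) = ∑ i, w i * rowNorm X i ^ 2 := by
  simp only [Matrix.mul_assoc, trace, diag, transpose_apply, mul_apply (M := Xᵀ), diagonal_mul,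
    rowNorm_sq, Finset.mul_sum]
  rw [Finset.sum_comm]
  exact Finset.sum_congr rfl fun _ _ => Finset.sum_congr rfl fun _ _ => by ring

end RowNorm

lemma Real.rpow_sub_mul_sq_le {s t p : ℝ} (hs : 0 < s) (ht : 0 ≤ t) (hp0 : 0 ≤ p)
    (hp2 : p ≤ 2) :
    t ^ p - p / 2 * (1 / s ^ (2 - p) * t ^ 2) ≤ s ^ p - p / 2 * (1 / s ^ (2 - p) * s ^ 2) := by
  have hsq_rpow : ∀ {x : ℝ}, 0 ≤ x → ∀ q : ℝ, (x ^ 2) ^ (q / 2) = x ^ q := by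
    intro x hx q
    rw [← Real.rpow_natCast, ← Real.rpow_mul hx]
    congr 1
    push_cast
    ring
  have amgm := Real.geom_mean_le_arith_mean2_weighted (w₁ := p / 2) (w₂ := (2 - p) / 2)
    (by linarith) (by linarith) (sq_nonneg t) (sq_nonneg s) (by ring)
  rw [hsq_rpow ht, hsq_rpow hs.le] at amgm
  have hs2p : 0 < s ^ (2 - p) := Real.rpow_pos_of_pos hs _
  have hsp : s ^ 2 / s ^ (2 - p) = s ^ p := by
    rw [← Real.rpow_natCast, ← Real.rpow_sub hs]; norm_num
  have key := (le_div_iff₀ hs2p).2 amgm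
  rw [add_div, mul_div_assoc, mul_div_assoc, hsp] at key
  rw [one_div_mul_eq_div, one_div_mul_eq_div, hsp]
  linarith

/-- One-step descent of the IQM in the case q = 2: if Q_k(X_{k+1}) ≤ Q_k(X_k)
then J(X_{k+1}) ≤ J(X_k), for 0 < p < 2. -/
theorem stmt_13 {m d n : ℕ} (A : Matrix (Fin m) (Fin d) ℝ) (Y : Matrix (Fin m) (Fin n) ℝ)
    (lam p : ℝ) (hlam : 0 < lam) (hp0 : 0 < p) (hp2 : p < 2)
    (Xk Xk1 : Matrix (Fin d) (Fin n) ℝ)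
    (hrowX : ∀ i, Xk i ≠ 0) :
    let Hk : Matrix (Fin d) (Fin d) ℝ :=
      Matrix.diagonal (fun i => 1 / rowNorm Xk i ^ (2 - p))
    let Qk : Matrix (Fin d) (Fin n) ℝ → ℝ := fun X =>
      Matrix.trace ((A * X - Y)ᵀ * (A * X - Y)) + lam * (p / 2) * Matrix.trace (Xᵀ * Hk * X)
    let J : Matrix (Fin d) (Fin n) ℝ → ℝ := fun X =>
      ∑ i, rowNorm (A * X - Y) i ^ 2 + lam * ∑ i, rowNorm X i ^ p
    Qk Xk1 ≤ Qk Xk → J Xk1 ≤ J Xk := by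
  intro Hk Qk J hQ
  set gap : Matrix (Fin d) (Fin n) ℝ → ℝ := fun X =>
    ∑ i, (rowNorm X i ^ p - p / 2 * (1 / rowNorm Xk i ^ (2 - p) * rowNorm X i ^ 2))
  have hJ : ∀ X, J X = Qk X + lam * gap X := fun X => by
    simp only [J, Qk, Hk, gap, trace_transpose_mul_self_eq_sum_rowNorm_sq,
      trace_transpose_mul_diagonal_mul_eq_sum, Finset.sum_sub_distrib, ← Finset.mul_sum]
    ring
  have hgap : gap Xk1 ≤ gap Xk := Finset.sum_le_sum fun i _ =>
    Real.rpow_sub_mul_sq_le (rowNorm_pos (hrowX i)) (rowNorm_nonneg Xk1 i) hp0.le hp2.le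
  rw [hJ, hJ]
  exact add_le_add hQ (mul_le_mul_of_nonneg_left hgap hlam.le)
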